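/- Let $M$ be the square matrix of size $d_+ = 2^{g-1}(2^g+1)$ whose rows and columns are indexed by even pairs $(a_1,a_2)$ and $(b_1,b_2)$ in $(\mathbb{Z}/2\mathbb{Z})^g \times (\mathbb{Z}/2\mathbb{Z})^g$ (i.e. pairs with $a_1\cdot a_2 = 0$), with entry $(-1)^{a_1\cdot b_2 + a_2\cdot b_1}$. Then $M^2 = 2^{g-1} M + 2^{2g-1} I$, where $I$ is the identity matrix. -/

import Mathlib

open Finset

def dot {g : ℕ} (a b : Fin g → ZMod 2) : ZMod 2 := ∑ i, a i * b i

def sgn (x : ZMod 2) : ℚ := (-1 : ℚ) ^ x.val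

/-- The type of even pairs in `(ℤ/2ℤ)^g × (ℤ/2ℤ)^g`. -/
def EvenPair (g : ℕ) : Type :=
  { p : (Fin g → ZMod 2) × (Fin g → ZMod 2) // dot p.1 p.2 = 0 }

instance (g : ℕ) : Fintype (EvenPair g) := by unfold EvenPair; infer_instance
instance (g : ℕ) : DecidableEq (EvenPair g) := by unfold EvenPair; infer_instance

/-- The matrix with entries `(-1)^(a₁·b₂ + a₂·b₁)` indexed by even pairs. -/
def M (g : ℕ) : Matrix (EvenPair g) (EvenPair g) ℚ :=
  fun a b => sgn (dot a.1.1 b.1.2 + dot a.1.2 b.1.1)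

/-!
Write `q a = a₁ · a₂` and `ω a b = a₁ · b₂ + a₂ · b₁` on `W = (ℤ/2)^g × (ℤ/2)^g`, so that
`M a b = (-1)^(ω a b)` and `q (a + b) = q a + q b + ω a b`. Then `(M²) a b` is the sum of
`(-1)^(ω (a + b) c)` over even `c`. Writing the indicator of `q c = 0` as `(1 + (-1)^(q c)) / 2`
splits it into a character sum over `W`, equal to `4^g` if `a = b` and `0` otherwise because `ω`
is nondegenerate, and a twisted Gauss sum: completing the square `c ↦ c + u` gives
`∑ (-1)^(q c + ω u c) = (-1)^(q u) 2^g`, and `q (a + b) = ω a b` for even `a, b`.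
-/

open Matrix

def sgnChar : AddChar (ZMod 2) ℚ := AddChar.zmodChar 2 (by norm_num : (-1 : ℚ) ^ 2 = 1)

lemma sgnChar_apply (x : ZMod 2) : sgnChar x = sgn x := AddChar.zmodChar_apply _ x

lemma sgn_zero : sgn 0 = 1 := rfl

lemma sgn_add (x y : ZMod 2) : sgn (x + y) = sgn x * sgn y := by
  simp only [← sgnChar_apply, AddChar.map_add_eq_mul]

lemma sgn_one : sgn 1 = -1 := by norm_num [sgn, ZMod.val_one]

lemma sgn_eq_one_iff {x : ZMod 2} : sgn x = 1 ↔ x = 0 := by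
  obtain rfl | rfl : x = 0 ∨ x = 1 := by decide +revert
  · simp [sgn_zero]
  · norm_num [sgn_one]

lemma ite_eq_zero_eq_half_add_sgn_mul (x : ZMod 2) (y : ℚ) :
    (if x = 0 then y else 0) = (y + sgn x * y) / 2 := by
  obtain rfl | rfl : x = 0 ∨ x = 1 := by decide +revert
  · simp [sgn_zero]
  · norm_num [sgn_one]

lemma sum_sgn_eq_zero {G : Type*} [AddGroup G] [Fintype G] {f : G →+ ZMod 2} (hf : f ≠ 0) :
    ∑ x, sgn (f x) = 0 := by
  have hψ : sgnChar.compAddMonoidHom f ≠ 0 := by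
    contrapose! hf
    ext x
    simpa [sgnChar_apply, sgn_eq_one_iff] using DFunLike.congr_fun hf x
  simpa [sgnChar_apply] using AddChar.sum_eq_zero_iff_ne_zero.2 hψ

lemma sum_subtype_eq_zero_eq_half_add_sum_sgn_mul {α : Type*} [Fintype α] (h : α → ZMod 2)
    [Fintype {x // h x = 0}] (f : α → ℚ) :
    ∑ x : {x // h x = 0}, f x = (∑ x, f x + ∑ x, sgn (h x) * f x) / 2 := by
  classical
  rw [← Finset.sum_subtype (univ.filter fun x => h x = 0) (by simp), Finset.sum_filter,
    ← Finset.sum_add_distrib, Finset.sum_div]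
  exact Finset.sum_congr rfl fun x _ => ite_eq_zero_eq_half_add_sgn_mul (h x) (f x)

section SymplecticPairs

variable {ι : Type*} [Fintype ι]

def quadForm (p : (ι → ZMod 2) × (ι → ZMod 2)) : ZMod 2 := p.1 ⬝ᵥ p.2

def sympForm (p : (ι → ZMod 2) × (ι → ZMod 2)) : (ι → ZMod 2) × (ι → ZMod 2) →+ ZMod 2 :=
  AddMonoidHom.mk' (fun q => p.1 ⬝ᵥ q.2 + p.2 ⬝ᵥ q.1) fun q r => by
    simp only [Prod.fst_add, Prod.snd_add, dotProduct_add]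
    ring

lemma sympForm_apply (p q : (ι → ZMod 2) × (ι → ZMod 2)) :
    sympForm p q = p.1 ⬝ᵥ q.2 + p.2 ⬝ᵥ q.1 := rfl

lemma sympForm_comm (p q : (ι → ZMod 2) × (ι → ZMod 2)) : sympForm p q = sympForm q p := by
  simp only [sympForm_apply, dotProduct_comm p.1, dotProduct_comm p.2, add_comm]

lemma sympForm_add_left (p p' q : (ι → ZMod 2) × (ι → ZMod 2)) :
    sympForm (p + p') q = sympForm p q + sympForm p' q := by
  simp only [sympForm_apply, Prod.fst_add, Prod.snd_add, add_dotProduct]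
  ring

lemma quadForm_add (p q : (ι → ZMod 2) × (ι → ZMod 2)) :
    quadForm (p + q) = quadForm p + quadForm q + sympForm p q := by
  simp only [quadForm, sympForm_apply, Prod.fst_add, Prod.snd_add, add_dotProduct,
    dotProduct_add, dotProduct_comm q.1 p.2]
  ring

variable [DecidableEq ι]

lemma sum_sgn_dotProduct (x : ι → ZMod 2) :
    ∑ y, sgn (x ⬝ᵥ y) = if x = 0 then 2 ^ Fintype.card ι else 0 := by
  split_ifs with hx
  · simp [hx, sgn_zero]
  · refine sum_sgn_eq_zero (f := AddMonoidHom.mk' (x ⬝ᵥ ·) (dotProduct_add x)) fun hf => hx ?_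
    exact dotProduct_eq_zero x fun y => DFunLike.congr_fun hf y

lemma sum_sgn_sympForm (u : (ι → ZMod 2) × (ι → ZMod 2)) :
    ∑ q, sgn (sympForm u q) = if u = 0 then 2 ^ (2 * Fintype.card ι) else 0 := by
  split_ifs with hu
  · simp [hu, sympForm_apply, sgn_zero]
    ring
  · refine sum_sgn_eq_zero fun hf => hu (Prod.ext ?_ ?_)
    · exact dotProduct_eq_zero _ fun y => by
        simpa [sympForm_apply] using DFunLike.congr_fun hf (0, y)
    · exact dotProduct_eq_zero _ fun y => by
        simpa [sympForm_apply] using DFunLike.congr_fun hf (y, 0)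

lemma sum_sgn_quadForm :
    ∑ q : (ι → ZMod 2) × (ι → ZMod 2), sgn (quadForm q) = 2 ^ Fintype.card ι := by
  simp [Fintype.sum_prod_type, quadForm, sum_sgn_dotProduct]

lemma sum_sgn_quadForm_mul_sgn_sympForm (u : (ι → ZMod 2) × (ι → ZMod 2)) :
    ∑ q, sgn (quadForm q) * sgn (sympForm u q) = sgn (quadForm u) * 2 ^ Fintype.card ι := by
  calc ∑ q, sgn (quadForm q) * sgn (sympForm u q)
      = ∑ q, sgn (quadForm u) * sgn (quadForm (q + u)) := by
        refine Finset.sum_congr rfl fun q _ => ?_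
        rw [← sgn_add, ← sgn_add, quadForm_add, sympForm_comm]
        congr 1
        grind
    _ = sgn (quadForm u) * 2 ^ Fintype.card ι := by
        rw [← Finset.mul_sum, ← sum_sgn_quadForm]
        congr 1
        exact Fintype.sum_equiv (Equiv.addRight u) _ _ fun _ => rfl

end SymplecticPairs

lemma M_apply {g : ℕ} (a b : EvenPair g) : M g a b = sgn (sympForm a.1 b.1) := rfl

lemma sum_evenPair {g : ℕ} (f : (Fin g → ZMod 2) × (Fin g → ZMod 2) → ℚ) :
    ∑ c : EvenPair g, f c.1 = (∑ x, f x + ∑ x, sgn (quadForm x) * f x) / 2 :=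
  sum_subtype_eq_zero_eq_half_add_sum_sgn_mul quadForm f

theorem stmt_3 (g : ℕ) (hg : 1 ≤ g) :
    M g * M g = ((2 : ℚ) ^ (g - 1)) • M g + ((2 : ℚ) ^ (2 * g - 1)) • 1 := by
  ext a b
  have entry : ∀ c : EvenPair g, M g a c * M g c b = sgn (sympForm (a.1 + b.1) c.1) := by
    intro c
    rw [M_apply, M_apply, ← sgn_add, sympForm_add_left, sympForm_comm c.1]
  have quad : quadForm (a.1 + b.1) = sympForm a.1 b.1 := by
    rw [quadForm_add, show quadForm a.1 = 0 from a.2, show quadForm b.1 = 0 from b.2, zero_add,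
      zero_add]
  have diag : a.1 + b.1 = 0 ↔ a = b := by
    rw [← ZModModule.sub_eq_add, sub_eq_zero]
    exact Subtype.ext_iff.symm
  obtain ⟨n, rfl⟩ : ∃ n, g = n + 1 := ⟨g - 1, by omega⟩
  rw [Matrix.mul_apply, Finset.sum_congr rfl fun c _ => entry c,
    sum_evenPair fun p => sgn (sympForm (a.1 + b.1) p), sum_sgn_sympForm,
    sum_sgn_quadForm_mul_sgn_sympForm, quad]
  simp only [Matrix.add_apply, Matrix.smul_apply, Matrix.one_apply, M_apply, diag, smul_eq_mul,
    Fintype.card_fin]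
  rw [show 2 * (n + 1) - 1 = 2 * n + 1 by omega, Nat.add_sub_cancel]
  split_ifs <;> ring
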